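/- Let (X,φ) and (Y,ψ) be Smale spaces. If (X,φ) and (Y,ψ) are flip conjugate, then they are asymptotically continuous orbit equivalent. -/

import Mathlib

open Filter Set Topology

noncomputable section

/-- Integer iterate of a homeomorphism. -/
def hIter {X : Type*} [TopologicalSpace X] (φ : X ≃ₜ X) (n : ℤ) (x : X) : X :=
  ((φ.toEquiv : Equiv.Perm X) ^ n) x

/-- The cocycle sums `f^n` of a function `f : X → ℤ` along the iterates of `φ`:
`f^n(x) = Σ_{i=0}^{n-1} f(φ^i(x))` for `n > 0`, `f^0 = 0`, and
`f^n(x) = −Σ_{i=n}^{-1} f(φ^i(x))` for `n < 0`. -/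
def cSum {X : Type*} [TopologicalSpace X] (φ : X ≃ₜ X) (f : X → ℤ) (n : ℤ) (x : X) : ℤ :=
  if 0 ≤ n then ∑ i ∈ Finset.range n.toNat, f (hIter φ i x)
  else -∑ i ∈ Finset.range (-n).toNat, f (hIter φ (n + i) x)

/-- Stable asymptotic pairs (limit definition). -/
def asympS {X : Type*} [MetricSpace X] (φ : X ≃ₜ X) : Set (X × X) :=
  {p | Tendsto (fun n : ℕ => dist (hIter φ n p.1) (hIter φ n p.2)) atTop (nhds 0)}

/-- Unstable asymptotic pairs (limit definition). -/
def asympU {X : Type*} [MetricSpace X] (φ : X ≃ₜ X) : Set (X × X) :=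
  {p | Tendsto (fun n : ℕ => dist (hIter φ (-(n : ℤ)) p.1) (hIter φ (-(n : ℤ)) p.2))
    atTop (nhds 0)}

/-- Asymptotic pairs (limit definition). -/
def asympA {X : Type*} [MetricSpace X] (φ : X ≃ₜ X) : Set (X × X) := asympS φ ∩ asympU φ

/-- The `ω`-limit set of `x`. -/
def omegaSet {X : Type*} [MetricSpace X] (φ : X ≃ₜ X) (x : X) : Set X :=
  {z | ∃ n : ℕ → ℕ, StrictMono n ∧ Tendsto (fun i => hIter φ (n i) x) atTop (nhds z)}

/-- The `α`-limit set of `x`. -/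
def alphaSet {X : Type*} [MetricSpace X] (φ : X ≃ₜ X) (x : X) : Set X :=
  {z | ∃ n : ℕ → ℤ, StrictAnti n ∧ Tendsto (fun i => hIter φ (n i) x) atTop (nhds z)}

/-- A Smale space structure on a compact metric space `X`. -/
structure SmaleSpace (X : Type*) [MetricSpace X] [CompactSpace X] where
  phi : X ≃ₜ X
  eps : ℝ
  lam : ℝ
  br : X → X → X
  eps_pos : 0 < eps
  lam_pos : 0 < lam
  lam_lt_one : lam < 1
  br_cont : ContinuousOn (fun p : X × X => br p.1 p.2) {p : X × X | dist p.1 p.2 < eps}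
  br_self : ∀ x : X, br x x = x
  br_assoc_left : ∀ x y z : X, dist x y < eps → dist (br x y) z < eps → dist x z < eps →
    br (br x y) z = br x z
  br_assoc_right : ∀ x y z : X, dist y z < eps → dist x (br y z) < eps → dist x z < eps →
    br x (br y z) = br x z
  phi_br : ∀ x y : X, dist x y < eps → dist (phi x) (phi y) < eps →
    phi (br x y) = br (phi x) (phi y)
  contract_s : ∀ x y z : X, br y x = y → dist x y < eps → br z x = z → dist x z < eps →
    dist (phi y) (phi z) ≤ lam * dist y z
  contract_u : ∀ x y z : X, br x y = y → dist x y < eps → br x z = z → dist x z < eps →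
    dist (phi.symm y) (phi.symm z) ≤ lam * dist y z

namespace SmaleSpace

variable {X Y : Type*} [MetricSpace X] [CompactSpace X] [MetricSpace Y] [CompactSpace Y]

/-- Local stable set `X^s(x,ε)`. -/
def Xs (S : SmaleSpace X) (x : X) (ε : ℝ) : Set X := {y | S.br y x = y ∧ dist x y < ε}

/-- Local unstable set `X^u(x,ε)`. -/
def Xu (S : SmaleSpace X) (x : X) (ε : ℝ) : Set X := {y | S.br x y = y ∧ dist x y < ε}

def Gs0 (S : SmaleSpace X) : Set (X × X) := {p | p.2 ∈ S.Xs p.1 S.eps}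

def Gu0 (S : SmaleSpace X) : Set (X × X) := {p | p.2 ∈ S.Xu p.1 S.eps}

/-- `G_φ^{s,n} = (φ×φ)^{-n}(G_φ^{s,0})`. -/
def GsN (S : SmaleSpace X) (n : ℤ) : Set (X × X) :=
  {p | (hIter S.phi n p.1, hIter S.phi n p.2) ∈ S.Gs0}

/-- `G_φ^{u,n} = (φ×φ)^{n}(G_φ^{u,0})`. -/
def GuN (S : SmaleSpace X) (n : ℤ) : Set (X × X) :=
  {p | (hIter S.phi (-n) p.1, hIter S.phi (-n) p.2) ∈ S.Gu0}

def GaN (S : SmaleSpace X) (n : ℤ) : Set (X × X) := S.GsN n ∩ S.GuN n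

/-- The asymptotic equivalence relation `G_φ^a = ⋃_{n ≥ 0} G_φ^{a,n}`. -/
def Ga (S : SmaleSpace X) : Set (X × X) := ⋃ n : ℕ, S.GaN n

lemma gaN_subset_ga (S : SmaleSpace X) (n : ℕ) : S.GaN n ⊆ S.Ga :=
  Set.subset_iUnion (fun k : ℕ => S.GaN k) n

/-- The inductive limit topology on `G_φ^a`: a set is open iff its intersection with each
`G_φ^{a,n}` is open in the subspace topology from `X × X`. -/
def gaTopology (S : SmaleSpace X) : TopologicalSpace ↥S.Ga :=
  ⨆ n : ℕ, TopologicalSpace.coinduced (Set.inclusion (S.gaN_subset_ga n)) inferInstance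

/-- Irreducibility of a Smale space. -/
def Irreducible (S : SmaleSpace X) : Prop :=
  ∀ U V : Set X, IsOpen U → U.Nonempty → IsOpen V → V.Nonempty →
    ∃ K : ℕ, ((hIter S.phi K '' U) ∩ V).Nonempty

def IsPeriodicPoint (S : SmaleSpace X) (x : X) : Prop :=
  ∃ p : ℕ, 0 < p ∧ hIter S.phi p x = x

/-- `h` is a flip conjugacy between `(X,φ)` and `(Y,ψ)`. -/
def IsFlipConjugacy (S : SmaleSpace X) (T : SmaleSpace Y) (h : X ≃ₜ Y) : Prop :=
  (∀ x, h (S.phi x) = T.phi (h x)) ∨ (∀ x, h (S.phi x) = T.phi.symm (h x))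

def FlipConjugate (S : SmaleSpace X) (T : SmaleSpace Y) : Prop :=
  ∃ h : X ≃ₜ Y, IsFlipConjugacy S T h

/-- An isomorphism of the principal étale groupoids `G_φ^a` and `G_ψ^a`:
a bijection which is a homeomorphism for the inductive limit topologies and preserves
the (equivalence relation) groupoid structure. -/
structure GaIso (S : SmaleSpace X) (T : SmaleSpace Y) where
  toEquiv : ↥S.Ga ≃ ↥T.Ga
  cont : @Continuous _ _ S.gaTopology T.gaTopology toEquiv
  cont_symm : @Continuous _ _ T.gaTopology S.gaTopology toEquiv.symm
  map_mul : ∀ p q r : ↥S.Ga, (p : X × X).2 = (q : X × X).1 →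
    (r : X × X) = ((p : X × X).1, (q : X × X).2) →
    (toEquiv p : Y × Y).2 = (toEquiv q : Y × Y).1 ∧
      (toEquiv r : Y × Y) = ((toEquiv p : Y × Y).1, (toEquiv q : Y × Y).2)

end SmaleSpace

namespace SmaleSpace

variable {X Y : Type*} [MetricSpace X] [CompactSpace X] [MetricSpace Y] [CompactSpace Y]

/-- The data of an asymptotic continuous orbit equivalence between two Smale spaces
`(X,φ)` and `(Y,ψ)`: a homeomorphism `h : X → Y`, continuous functions `c₁ : X → ℤ`,
`c₂ : Y → ℤ` and continuous two-cocycle functions `d₁ : G_φ^a → ℤ`, `d₂ : G_ψ^a → ℤ`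
satisfying conditions (1), (2) and (i)–(viii) of the definition of asymptotic continuous
orbit equivalence. -/
structure ACOEData (S : SmaleSpace X) (T : SmaleSpace Y) where
  h : X ≃ₜ Y
  c₁ : X → ℤ
  c₂ : Y → ℤ
  d₁ : X → X → ℤ
  d₂ : Y → Y → ℤ
  c₁_cont : Continuous c₁
  c₂_cont : Continuous c₂
  d₁_cocycle : ∀ x z w : X, (x, z) ∈ S.Ga → (z, w) ∈ S.Ga → d₁ x z + d₁ z w = d₁ x w
  d₂_cocycle : ∀ y w v : Y, (y, w) ∈ T.Ga → (w, v) ∈ T.Ga → d₂ y w + d₂ w v = d₂ y v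
  d₁_cont : @Continuous ↥S.Ga ℤ S.gaTopology _ fun p => d₁ (p : X × X).1 (p : X × X).2
  d₂_cont : @Continuous ↥T.Ga ℤ T.gaTopology _ fun p => d₂ (p : Y × Y).1 (p : Y × Y).2
  cocycle_eq₁ : ∀ (m : ℤ) (x z : X), (x, z) ∈ S.Ga →
    cSum S.phi c₁ m x + d₁ (hIter S.phi m x) (hIter S.phi m z)
      = cSum S.phi c₁ m z + d₁ x z
  cocycle_eq₂ : ∀ (m : ℤ) (y w : Y), (y, w) ∈ T.Ga →
    cSum T.phi c₂ m y + d₂ (hIter T.phi m y) (hIter T.phi m w)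
      = cSum T.phi c₂ m w + d₂ y w
  xi₁_mem : ∀ (n : ℤ) (x : X),
    (hIter T.phi (cSum S.phi c₁ n x) (h x), h (hIter S.phi n x)) ∈ T.Ga
  xi₁_cont : ∀ n : ℤ, @Continuous X ↥T.Ga _ T.gaTopology
    fun x => ⟨(hIter T.phi (cSum S.phi c₁ n x) (h x), h (hIter S.phi n x)), xi₁_mem n x⟩
  xi₂_mem : ∀ (n : ℤ) (y : Y),
    (hIter S.phi (cSum T.phi c₂ n y) (h.symm y), h.symm (hIter T.phi n y)) ∈ S.Ga
  xi₂_cont : ∀ n : ℤ, @Continuous Y ↥S.Ga _ S.gaTopology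
    fun y => ⟨(hIter S.phi (cSum T.phi c₂ n y) (h.symm y), h.symm (hIter T.phi n y)),
      xi₂_mem n y⟩
  eta₁_mem : ∀ x z : X, (x, z) ∈ S.Ga → (hIter T.phi (d₁ x z) (h x), h z) ∈ T.Ga
  eta₁_cont : @Continuous ↥S.Ga ↥T.Ga S.gaTopology T.gaTopology
    fun p => ⟨(hIter T.phi (d₁ (p : X × X).1 (p : X × X).2) (h (p : X × X).1),
      h (p : X × X).2), eta₁_mem (p : X × X).1 (p : X × X).2 p.2⟩
  eta₂_mem : ∀ y w : Y, (y, w) ∈ T.Ga → (hIter S.phi (d₂ y w) (h.symm y), h.symm w) ∈ S.Ga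
  eta₂_cont : @Continuous ↥T.Ga ↥S.Ga T.gaTopology S.gaTopology
    fun p => ⟨(hIter S.phi (d₂ (p : Y × Y).1 (p : Y × Y).2) (h.symm (p : Y × Y).1),
      h.symm (p : Y × Y).2), eta₂_mem (p : Y × Y).1 (p : Y × Y).2 p.2⟩
  cond_v : ∀ (n : ℤ) (x : X),
    cSum T.phi c₂ (cSum S.phi c₁ n x) (h x)
      + d₂ (hIter T.phi (cSum S.phi c₁ n x) (h x)) (h (hIter S.phi n x)) = n
  cond_vi : ∀ (n : ℤ) (y : Y),
    cSum S.phi c₁ (cSum T.phi c₂ n y) (h.symm y)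
      + d₁ (hIter S.phi (cSum T.phi c₂ n y) (h.symm y)) (h.symm (hIter T.phi n y)) = n
  cond_vii : ∀ x z : X, (x, z) ∈ S.Ga →
    cSum T.phi c₂ (d₁ x z) (h x) + d₂ (hIter T.phi (d₁ x z) (h x)) (h z) = 0
  cond_viii : ∀ y w : Y, (y, w) ∈ T.Ga →
    cSum S.phi c₁ (d₂ y w) (h.symm y) + d₁ (hIter S.phi (d₂ y w) (h.symm y)) (h.symm w) = 0

/-- Asymptotic continuous orbit equivalence of Smale spaces. -/
def ACOE (S : SmaleSpace X) (T : SmaleSpace Y) : Prop := Nonempty (ACOEData S T)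

/-- Asymptotic flip conjugacy: asymptotic continuous orbit equivalence in which the cocycle
data can be chosen as `c₁ ≡ 1, c₂ ≡ 1, d₁ ≡ 0, d₂ ≡ 0` or as
`c₁ ≡ −1, c₂ ≡ −1, d₁ ≡ 0, d₂ ≡ 0`. -/
def AsymptoticallyFlipConjugate (S : SmaleSpace X) (T : SmaleSpace Y) : Prop :=
  ∃ A : ACOEData S T,
    (A.c₁ = (fun _ => 1) ∧ A.c₂ = (fun _ => 1) ∧
      A.d₁ = (fun _ _ => 0) ∧ A.d₂ = (fun _ _ => 0)) ∨
    (A.c₁ = (fun _ => -1) ∧ A.c₂ = (fun _ => -1) ∧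
      A.d₁ = (fun _ _ => 0) ∧ A.d₂ = (fun _ _ => 0))

end SmaleSpace

/-!
A flip conjugacy `h` intertwines `φ^j` with `ψ^{ej}` for a fixed sign `e = ±1`, so it is an
asymptotic continuous orbit equivalence with constant cocycles `c₁ ≡ c₂ ≡ e` and `d₁ ≡ d₂ ≡ 0`;
conditions (1), (2), (v)–(viii) are then arithmetic and the maps `ξⁿ` land on the diagonal.
The only geometric point is that `h × h` maps each level `G_φ^{a,n}` into some level
`G_ψ^{a,m}`, which gives `η₁, η₂` and their continuity for the inductive limit topologies.
For the stable half this is expansivity of `ψ` (points whose forward orbits stay uniformly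
close are locally stably related) combined with contraction along local stable sets of `φ` and
uniform continuity of `h`; the unstable half is the stable half for the reversed Smale spaces
`(X, φ⁻¹)` and `(Y, ψ⁻¹)`.
-/

def Homeomorph.toPermHom (X : Type*) [TopologicalSpace X] : (X ≃ₜ X) →* Equiv.Perm X where
  toFun := Homeomorph.toEquiv
  map_one' := rfl
  map_mul' _ _ := rfl

section Iterate

variable {X Y : Type*} [TopologicalSpace X] [TopologicalSpace Y]

lemma hIter_apply (φ : X ≃ₜ X) (n : ℤ) (x : X) : hIter φ n x = (φ ^ n) x := by
  rw [hIter, show (φ.toEquiv : Equiv.Perm X) = Homeomorph.toPermHom X φ from rfl, ← map_zpow]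
  rfl

@[simp] lemma hIter_zero (φ : X ≃ₜ X) (x : X) : hIter φ 0 x = x := by
  simp [hIter_apply]

lemma hIter_add (φ : X ≃ₜ X) (m n : ℤ) (x : X) :
    hIter φ (m + n) x = hIter φ m (hIter φ n x) := by
  simp [hIter_apply, zpow_add]

lemma hIter_succ (φ : X ≃ₜ X) (k : ℕ) (x : X) : hIter φ (k + 1 : ℕ) x = φ (hIter φ k x) := by
  rw [hIter_apply, hIter_apply, Nat.cast_succ, add_comm, zpow_one_add, Homeomorph.mul_apply]

lemma hIter_symm (φ : X ≃ₜ X) (n : ℤ) (x : X) : hIter φ.symm n x = hIter φ (-n) x := by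
  rw [show φ.symm = φ⁻¹ from rfl, hIter_apply, hIter_apply, inv_zpow']

lemma continuous_hIter (φ : X ≃ₜ X) (n : ℤ) : Continuous (hIter φ n) := by
  simpa only [funext (hIter_apply φ n)] using (φ ^ n).continuous

lemma Function.Semiconj.hIter {f : X → Y} {φ : X ≃ₜ X} {ψ : Y ≃ₜ Y}
    (hf : Function.Semiconj f φ ψ) (n : ℤ) : Function.Semiconj f (hIter φ n) (hIter ψ n) := by
  have hnat : ∀ k : ℕ, Function.Semiconj f (_root_.hIter φ k) (_root_.hIter ψ k) := fun k x => by
    simpa only [_root_.hIter, zpow_natCast, Equiv.Perm.coe_pow, Homeomorph.coe_toEquiv] using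
      hf.iterate_right k x
  obtain ⟨k, rfl | rfl⟩ := Int.eq_nat_or_neg n
  · exact hnat k
  · refine (hnat k).inverses_right (fun x => ?_) (fun y => ?_) <;> simp [← hIter_add]

lemma cSum_const (φ : X ≃ₜ X) (c n : ℤ) (x : X) : cSum φ (fun _ => c) n x = n * c := by
  unfold cSum
  split_ifs with hn
  · simp [Int.toNat_of_nonneg hn]
  · simp [Int.toNat_of_nonneg (by omega : (0:ℤ) ≤ -n)]

end Iterate

namespace SmaleSpace

variable {X Y : Type*} [MetricSpace X] [CompactSpace X] [MetricSpace Y] [CompactSpace Y]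

variable (S : SmaleSpace X)

lemma lam_pow_mul_le (k : ℕ) {r : ℝ} (hr : 0 ≤ r) : S.lam ^ k * r ≤ r :=
  mul_le_of_le_one_left hr (pow_le_one₀ S.lam_pos.le S.lam_lt_one.le)

lemma diag_mem_gaN_zero (x : X) : (x, x) ∈ S.GaN 0 := by
  have hx : S.br x x = x ∧ dist x x < S.eps := ⟨S.br_self x, by simpa using S.eps_pos⟩
  exact ⟨by simpa [GsN, Gs0, Xs] using hx, by simpa [GuN, Gu0, Xu] using hx⟩

lemma diag_mem_ga (x : X) : (x, x) ∈ S.Ga :=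
  S.gaN_subset_ga 0 (S.diag_mem_gaN_zero x)

variable {S}

lemma phi_mem_gs0 {x y : X} (hxy : (x, y) ∈ S.Gs0) :
    (S.phi x, S.phi y) ∈ S.Gs0 ∧ dist (S.phi x) (S.phi y) ≤ S.lam * dist x y := by
  obtain ⟨hbr, hd⟩ := hxy
  have hcontr : dist (S.phi x) (S.phi y) ≤ S.lam * dist x y := by
    simpa only [dist_comm] using
      S.contract_s x y x hbr hd (S.br_self x) (by simpa using S.eps_pos)
  have hd' : dist (S.phi x) (S.phi y) < S.eps :=
    hcontr.trans_lt ((mul_le_of_le_one_left dist_nonneg S.lam_lt_one.le).trans_lt hd)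
  refine ⟨⟨?_, hd'⟩, hcontr⟩
  rw [← S.phi_br y x (by rwa [dist_comm]) (by rwa [dist_comm]), hbr]

lemma hIter_mem_gs0 {x y : X} (hxy : (x, y) ∈ S.Gs0) (k : ℕ) :
    (hIter S.phi k x, hIter S.phi k y) ∈ S.Gs0 ∧
      dist (hIter S.phi k x) (hIter S.phi k y) ≤ S.lam ^ k * dist x y := by
  induction k with
  | zero => simpa using hxy
  | succ k ih =>
    obtain ⟨hmem, hcontr⟩ := phi_mem_gs0 ih.1
    rw [hIter_succ, hIter_succ]
    refine ⟨hmem, hcontr.trans ?_⟩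
    rw [pow_succ', mul_assoc]
    exact mul_le_mul_of_nonneg_left ih.2 S.lam_pos.le

lemma phi_mem_gu0 {x y : X} (hxy : (x, y) ∈ S.Gu0) (hd : dist (S.phi x) (S.phi y) < S.eps) :
    (S.phi x, S.phi y) ∈ S.Gu0 := by
  refine ⟨?_, hd⟩
  rw [← S.phi_br x y hxy.2 hd, hxy.1]

lemma dist_le_lam_mul_of_phi_mem_gu0 {x y : X} (hxy : (S.phi x, S.phi y) ∈ S.Gu0) :
    dist x y ≤ S.lam * dist (S.phi x) (S.phi y) := by
  simpa using S.contract_u (S.phi x) (S.phi x) (S.phi y) (S.br_self _)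
    (by simpa using S.eps_pos) hxy.1 hxy.2

lemma eq_of_mem_gu0_of_forall_dist_hIter_lt {x y : X} (hxy : (x, y) ∈ S.Gu0)
    (hd : ∀ k : ℕ, dist (hIter S.phi k x) (hIter S.phi k y) < S.eps) : x = y := by
  have hmem : ∀ k : ℕ, (hIter S.phi k x, hIter S.phi k y) ∈ S.Gu0 := by
    intro k
    induction k with
    | zero => simpa using hxy
    | succ k ih =>
      rw [hIter_succ, hIter_succ]
      exact phi_mem_gu0 ih (by simpa only [hIter_succ] using hd (k + 1))
  have hback : ∀ k : ℕ, dist x y ≤ S.lam ^ k * dist (hIter S.phi k x) (hIter S.phi k y) := by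
    intro k
    induction k with
    | zero => simp
    | succ k ih =>
      have hstep := dist_le_lam_mul_of_phi_mem_gu0 (by simpa only [hIter_succ] using hmem (k + 1))
      calc dist x y ≤ S.lam ^ k * dist (hIter S.phi k x) (hIter S.phi k y) := ih
        _ ≤ S.lam ^ k * (S.lam * dist (S.phi (hIter S.phi k x)) (S.phi (hIter S.phi k y))) :=
          mul_le_mul_of_nonneg_left hstep (pow_nonneg S.lam_pos.le k)
        _ = _ := by rw [hIter_succ, hIter_succ]; ring
  have hlim : Tendsto (fun k : ℕ => S.lam ^ k * S.eps) atTop (𝓝 0) := by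
    simpa using (tendsto_pow_atTop_nhds_zero_of_lt_one S.lam_pos.le S.lam_lt_one).mul_const S.eps
  have hle : dist x y ≤ 0 := ge_of_tendsto' hlim fun k =>
    (hback k).trans (mul_le_mul_of_nonneg_left (hd k).le (pow_nonneg S.lam_pos.le k))
  exact dist_le_zero.mp hle

variable (S)

/-- The Smale space `(X, φ⁻¹)`: the bracket is flipped, so stable and unstable sets swap. -/
def rev : SmaleSpace X where
  phi := S.phi.symm
  eps := S.eps
  lam := S.lam
  br x y := S.br y x
  eps_pos := S.eps_pos
  lam_pos := S.lam_pos
  lam_lt_one := S.lam_lt_one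
  br_cont := S.br_cont.comp continuous_swap.continuousOn fun p hp => by
    simpa [dist_comm] using hp
  br_self := S.br_self
  br_assoc_left x y z h₁ h₂ h₃ := by
    rw [dist_comm] at h₁ h₂ h₃
    exact S.br_assoc_right z y x h₁ h₂ h₃
  br_assoc_right x y z h₁ h₂ h₃ := by
    rw [dist_comm] at h₁ h₂ h₃
    exact S.br_assoc_left z y x h₁ h₂ h₃
  phi_br x y h₁ h₂ := by
    apply S.phi.injective
    rw [dist_comm] at h₁ h₂
    simpa using
      (S.phi_br (S.phi.symm y) (S.phi.symm x) (by simpa using h₂) (by simpa using h₁)).symm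
  contract_s := S.contract_u
  contract_u x y z h₁ h₂ h₃ h₄ := by simpa using S.contract_s x y z h₁ h₂ h₃ h₄

lemma rev_gsN (n : ℤ) : S.rev.GsN n = S.GuN n := by
  ext p
  simp only [GsN, GuN, rev, hIter_symm]
  rfl

lemma rev_guN (n : ℤ) : S.rev.GuN n = S.GsN n := by
  ext p
  simp only [GsN, GuN, rev, hIter_symm, neg_neg]
  rfl

lemma rev_gaN (n : ℤ) : S.rev.GaN n = S.GaN n := by
  rw [GaN, GaN, rev_gsN, rev_guN, Set.inter_comm]

lemma gsN_mono {m n : ℤ} (hmn : m ≤ n) : S.GsN m ⊆ S.GsN n := by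
  rintro ⟨x, y⟩ hxy
  obtain ⟨k, rfl⟩ := Int.exists_add_of_le hmn
  obtain ⟨hmem, hd⟩ := hIter_mem_gs0 hxy k
  refine ⟨by simpa only [add_comm m, hIter_add] using hmem.1, ?_⟩
  simp only [add_comm m, hIter_add]
  exact hd.trans_lt ((S.lam_pow_mul_le k dist_nonneg).trans_lt hxy.2)

lemma guN_mono {m n : ℤ} (hmn : m ≤ n) : S.GuN m ⊆ S.GuN n := by
  simpa only [rev_gsN] using S.rev.gsN_mono hmn

lemma exists_br_mem_xs_inter_xu {ε : ℝ} (hε : 0 < ε) (hεS : ε ≤ S.eps) :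
    ∃ δ > 0, ∀ x y : X, dist x y < δ → S.br x y ∈ S.Xs y ε ∩ S.Xu x ε := by
  set K : Set (X × X) := {p | dist p.1 p.2 ≤ S.eps / 2}
  have hK : IsCompact K := (isClosed_le (by fun_prop) continuous_const).isCompact
  have hKS : K ⊆ {p | dist p.1 p.2 < S.eps} := fun p hp =>
    lt_of_le_of_lt hp (half_lt_self S.eps_pos)
  obtain ⟨δ, hδ, hbr⟩ := Metric.uniformContinuousOn_iff.mp
    (hK.uniformContinuousOn_of_continuous (S.br_cont.mono hKS)) ε hε
  have hdiag : ∀ z : X, (z, z) ∈ K := fun z => by simpa [K] using (half_pos S.eps_pos).le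
  refine ⟨min δ (S.eps / 2), lt_min hδ (half_pos S.eps_pos), fun x y hxy => ?_⟩
  have hxyδ : dist x y < δ := hxy.trans_le (min_le_left _ _)
  have hxyK : (x, y) ∈ K := (hxy.trans_le (min_le_right _ _)).le
  have hy : dist (S.br x y) y < ε := by
    simpa [S.br_self, Prod.dist_eq, hxyδ, hδ] using hbr _ hxyK _ (hdiag y)
  have hx : dist (S.br x y) x < ε := by
    simpa [S.br_self, Prod.dist_eq, dist_comm, hxyδ, hδ] using hbr _ hxyK _ (hdiag x)
  have hxyS : dist x y < S.eps := hKS hxyK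
  refine ⟨⟨S.br_assoc_left x y y hxyS (hy.trans_le hεS) hxyS, by rwa [dist_comm]⟩,
    ⟨S.br_assoc_right x x y hxyS (by rw [dist_comm]; exact hx.trans_le hεS) hxyS,
      by rwa [dist_comm]⟩⟩

lemma exists_mem_gs0_of_forall_dist_hIter_lt :
    ∃ δ > 0, ∀ x y : X, (∀ k : ℕ, dist (hIter S.phi k x) (hIter S.phi k y) < δ) →
      (x, y) ∈ S.Gs0 := by
  have hε : 0 < S.eps / 4 := by linarith [S.eps_pos]
  obtain ⟨δ, hδ, hbr⟩ := S.exists_br_mem_xs_inter_xu hε (by linarith [S.eps_pos])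
  refine ⟨min δ (S.eps / 4), lt_min hδ hε, fun x y hclose => ?_⟩
  have hxy : dist x y < min δ (S.eps / 4) := by simpa using hclose 0
  obtain ⟨⟨hvs, hdv⟩, ⟨hvu, hdv'⟩⟩ :=
    hbr y x (by rw [dist_comm]; exact hxy.trans_le (min_le_left _ _))
  -- `v = [y, x]` is forward asymptotic to `x` and backward asymptotic to `y`
  set v := S.br y x
  have hxv : (x, v) ∈ S.Gs0 := ⟨hvs, hdv.trans (by linarith [S.eps_pos])⟩
  have hyv_close : ∀ k : ℕ, dist (hIter S.phi k y) (hIter S.phi k v) < S.eps := fun k =>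
    calc dist (hIter S.phi k y) (hIter S.phi k v)
        ≤ dist (hIter S.phi k x) (hIter S.phi k y) + dist (hIter S.phi k x) (hIter S.phi k v) :=
          dist_triangle_left _ _ _
      _ < S.eps / 4 + S.eps / 4 := add_lt_add_of_lt_of_le
          ((hclose k).trans_le (min_le_right _ _))
          ((hIter_mem_gs0 hxv k).2.trans ((S.lam_pow_mul_le k dist_nonneg).trans hdv.le))
      _ < S.eps := by linarith [S.eps_pos]
  have hyv : y = v := eq_of_mem_gu0_of_forall_dist_hIter_lt
    ⟨hvu, hdv'.trans (by linarith [S.eps_pos])⟩ hyv_close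
  exact ⟨hyv ▸ hvs, hxy.trans_le (min_le_right _ _) |>.trans (by linarith [S.eps_pos])⟩

variable {S} {T : SmaleSpace Y}

lemma exists_mapsTo_gsN {h : X → Y} (hh : Continuous h) (hc : Function.Semiconj h S.phi T.phi)
    (n : ℕ) : ∃ m : ℕ, MapsTo (Prod.map h h) (S.GsN n) (T.GsN m) := by
  obtain ⟨δ, hδ, hexp⟩ := T.exists_mem_gs0_of_forall_dist_hIter_lt
  obtain ⟨ρ, hρ, hhρ⟩ := Metric.uniformContinuous_iff.mp
    (CompactSpace.uniformContinuous_of_continuous hh) δ hδ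
  obtain ⟨K, hK⟩ := exists_pow_lt_of_lt_one (div_pos hρ S.eps_pos) S.lam_lt_one
  refine ⟨n + K, fun ⟨x, z⟩ hxz => hexp _ _ fun k => ?_⟩
  have hiter : ∀ u : X, hIter T.phi k (hIter T.phi (n + K : ℕ) (h u))
      = h (hIter S.phi (K + k : ℕ) (hIter S.phi n u)) := fun u => by
    rw [← hIter_add, (hc.hIter _ _).symm, ← hIter_add]
    congr 2
    push_cast
    ring
  simp only [Prod.map, hiter]
  apply hhρ
  calc dist (hIter S.phi (K + k : ℕ) (hIter S.phi n x)) (hIter S.phi (K + k : ℕ) (hIter S.phi n z))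
      ≤ S.lam ^ (K + k) * dist (hIter S.phi n x) (hIter S.phi n z) := (hIter_mem_gs0 hxz _).2
    _ ≤ S.lam ^ K * S.eps := by
      rw [pow_add, mul_assoc]
      exact mul_le_mul_of_nonneg_left (S.lam_pow_mul_le k dist_nonneg |>.trans hxz.2.le)
        (pow_nonneg S.lam_pos.le K)
    _ < ρ := (lt_div_iff₀ S.eps_pos).mp hK

lemma exists_mapsTo_gaN {h : X → Y} (hh : Continuous h) (hc : Function.Semiconj h S.phi T.phi)
    (n : ℕ) : ∃ m : ℕ, MapsTo (Prod.map h h) (S.GaN n) (T.GaN m) := by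
  have hc_rev : Function.Semiconj h S.rev.phi T.rev.phi :=
    hc.inverses_right S.phi.apply_symm_apply T.phi.symm_apply_apply
  obtain ⟨ms, hms⟩ := exists_mapsTo_gsN hh hc n
  obtain ⟨mu, hmu⟩ := exists_mapsTo_gsN hh hc_rev n
  rw [rev_gsN, rev_gsN] at hmu
  exact ⟨max ms mu, fun p hp => ⟨T.gsN_mono (by omega) (hms hp.1),
    T.guN_mono (by omega) (hmu hp.2)⟩⟩

lemma continuous_gaTopology_of_mem_gaN {Z : Type*} [TopologicalSpace Z] {f : Z → S.Ga} (m : ℕ)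
    (hm : ∀ z, (f z : X × X) ∈ S.GaN m) (hf : Continuous fun z => (f z : X × X)) :
    Continuous[_, S.gaTopology] f := by
  have hincl : Continuous[_, S.gaTopology] (Set.inclusion (S.gaN_subset_ga m)) :=
    continuous_iSup_rng (i := m) continuous_coinduced_rng
  exact @Continuous.comp _ _ _ _ _ S.gaTopology (fun z => (⟨f z, hm z⟩ : S.GaN m)) _ hincl
    (hf.subtype_mk hm)

lemma continuous_of_gaTopology {W : Type*} {tW : TopologicalSpace W} {f : S.Ga → W}
    (hf : ∀ n : ℕ, Continuous (f ∘ Set.inclusion (S.gaN_subset_ga n))) :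
    Continuous[S.gaTopology, tW] f :=
  continuous_iSup_dom.mpr fun n => continuous_coinduced_dom.mpr (hf n)

lemma mapsTo_ga {f : X × X → Y × Y} (hf : ∀ n : ℕ, ∃ m : ℕ, MapsTo f (S.GaN n) (T.GaN m)) :
    MapsTo f S.Ga T.Ga := by
  intro p hp
  obtain ⟨n, hn⟩ := Set.mem_iUnion.mp hp
  obtain ⟨m, hm⟩ := hf n
  exact T.gaN_subset_ga m (hm hn)

lemma continuous_restrict_ga {f : X × X → Y × Y} (hfc : Continuous f)
    (hf : ∀ n : ℕ, ∃ m : ℕ, MapsTo f (S.GaN n) (T.GaN m)) :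
    Continuous[S.gaTopology, T.gaTopology] ((mapsTo_ga hf).restrict f S.Ga T.Ga) := by
  refine continuous_of_gaTopology (tW := T.gaTopology) fun n => ?_
  obtain ⟨m, hm⟩ := hf n
  exact continuous_gaTopology_of_mem_gaN m (fun p => hm p.2)
    (hfc.comp continuous_subtype_val)

def ACOEData.ofConjugacy (h : X ≃ₜ Y) (e : ℤ) (he : e * e = 1)
    (hconj : ∀ (j : ℤ) (x : X), h (hIter S.phi j x) = hIter T.phi (e * j) (h x))
    (hS : ∀ n : ℕ, ∃ m : ℕ, MapsTo (Prod.map h h) (S.GaN n) (T.GaN m))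
    (hT : ∀ n : ℕ, ∃ m : ℕ, MapsTo (Prod.map h.symm h.symm) (T.GaN n) (S.GaN m)) :
    ACOEData S T := by
  have hconj' : ∀ (j : ℤ) (y : Y), h.symm (hIter T.phi j y) = hIter S.phi (e * j) (h.symm y) :=
    fun j y => h.injective <| by rw [hconj, ← mul_assoc, he, one_mul, h.apply_symm_apply,
      h.apply_symm_apply]
  have hξ₁ : ∀ n : ℤ, Continuous fun x => (hIter T.phi (n * e) (h x), h (hIter S.phi n x)) :=
    fun n => ((continuous_hIter _ _).comp h.continuous).prodMk
      (h.continuous.comp (continuous_hIter _ _))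
  have hξ₂ : ∀ n : ℤ,
      Continuous fun y => (hIter S.phi (n * e) (h.symm y), h.symm (hIter T.phi n y)) :=
    fun n => ((continuous_hIter _ _).comp h.symm.continuous).prodMk
      (h.symm.continuous.comp (continuous_hIter _ _))
  refine
  { h := h
    c₁ := fun _ => e
    c₂ := fun _ => e
    d₁ := fun _ _ => 0
    d₂ := fun _ _ => 0
    c₁_cont := continuous_const
    c₂_cont := continuous_const
    d₁_cocycle := fun _ _ _ _ _ => rfl
    d₂_cocycle := fun _ _ _ _ _ => rfl
    d₁_cont := @continuous_const _ _ S.gaTopology _ _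
    d₂_cont := @continuous_const _ _ T.gaTopology _ _
    cocycle_eq₁ := fun m x z _ => by simp [cSum_const]
    cocycle_eq₂ := fun m y w _ => by simp [cSum_const]
    xi₁_mem := fun n x => by
      rw [cSum_const, hconj, mul_comm]
      exact T.diag_mem_ga _
    xi₁_cont := fun n => continuous_gaTopology_of_mem_gaN 0
      (fun x => by simpa [cSum_const, hconj, mul_comm] using T.diag_mem_gaN_zero _)
      (by simpa only [cSum_const] using hξ₁ n)
    xi₂_mem := fun n y => by
      rw [cSum_const, hconj', mul_comm]
      exact S.diag_mem_ga _
    xi₂_cont := fun n => continuous_gaTopology_of_mem_gaN 0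
      (fun y => by simpa [cSum_const, hconj', mul_comm] using S.diag_mem_gaN_zero _)
      (by simpa only [cSum_const] using hξ₂ n)
    eta₁_mem := fun x z hxz => by simpa using mapsTo_ga hS hxz
    eta₁_cont := by
      simp only [hIter_zero]
      exact continuous_restrict_ga (h.continuous.prodMap h.continuous) hS
    eta₂_mem := fun y w hyw => by simpa using mapsTo_ga hT hyw
    eta₂_cont := by
      simp only [hIter_zero]
      exact continuous_restrict_ga (h.symm.continuous.prodMap h.symm.continuous) hT
    cond_v := fun n x => by simp [cSum_const, mul_assoc, he]
    cond_vi := fun n y => by simp [cSum_const, mul_assoc, he]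
    cond_vii := fun x z _ => by simp [cSum_const]
    cond_viii := fun y w _ => by simp [cSum_const] }

variable {h : X ≃ₜ Y}

lemma IsFlipConjugacy.symm (hh : IsFlipConjugacy S T h) : IsFlipConjugacy T S h.symm := by
  rcases hh with hc | hc
  · exact .inl (Function.Semiconj.inverse_left hc h.left_inv h.right_inv)
  · exact .inr ((Function.Semiconj.inverse_left hc h.left_inv h.right_inv).inverses_right
      T.phi.symm_apply_apply S.phi.symm_apply_apply)

lemma IsFlipConjugacy.exists_sign_hIter (hh : IsFlipConjugacy S T h) :
    ∃ e : ℤ, e * e = 1 ∧ ∀ (j : ℤ) (x : X), h (hIter S.phi j x) = hIter T.phi (e * j) (h x) := by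
  rcases hh with hc | hc
  · exact ⟨1, rfl, fun j x => by simpa using Function.Semiconj.hIter hc j x⟩
  · exact ⟨-1, rfl, fun j x => by simpa [hIter_symm] using Function.Semiconj.hIter hc j x⟩

lemma IsFlipConjugacy.exists_mapsTo_gaN (hh : IsFlipConjugacy S T h) (n : ℕ) :
    ∃ m : ℕ, MapsTo (Prod.map h h) (S.GaN n) (T.GaN m) := by
  rcases hh with hc | hc
  · exact SmaleSpace.exists_mapsTo_gaN h.continuous hc n
  · simpa only [rev_gaN] using SmaleSpace.exists_mapsTo_gaN (T := T.rev) h.continuous hc n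

end SmaleSpace

/-- If Smale spaces `(X,φ)` and `(Y,ψ)` are flip conjugate, then they are
asymptotically continuous orbit equivalent. -/
theorem flipConjugate_implies_ACOE {X Y : Type*} [MetricSpace X] [CompactSpace X]
    [MetricSpace Y] [CompactSpace Y] (S : SmaleSpace X) (T : SmaleSpace Y)
    (hflip : SmaleSpace.FlipConjugate S T) :
    SmaleSpace.ACOE S T := by
  obtain ⟨h, hh⟩ := hflip
  obtain ⟨e, he, hconj⟩ := hh.exists_sign_hIter
  exact ⟨.ofConjugacy h e he hconj hh.exists_mapsTo_gaN hh.symm.exists_mapsTo_gaN⟩
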